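/- Let η be a rational shift-invariant probability measure on Σ^k, and let G_η be the De-Bruijn-type multigraph on vertex set Σ^{k−1} with Mη(a_0⋯a_{k−1}) parallel edges from a_0⋯a_{k−2} to a_1⋯a_{k−1} (M the least integer making Mη integral), with isolated vertices removed. Then there exists a word ω with fr_ω^k = η if and only if G_η is strongly connected. -/

import Mathlib

open Finset

def occCount {A : Type*} [DecidableEq A] (k : ℕ) (ω : List A) (φ : Fin k → A) : ℕ :=
  ((Finset.range (ω.length - k + 1)).filter
    (fun i => ∀ j : Fin k, ω[i + (j : ℕ)]? = some (φ j))).card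

noncomputable def freq {A : Type*} [DecidableEq A] (k : ℕ) (ω : List A) (φ : Fin k → A) : ℝ :=
  (occCount k ω φ : ℝ) / ((ω.length - k + 1 : ℕ) : ℝ)

def IsProbVec {A : Type*} [Fintype A] {k : ℕ} (η : (Fin k → A) → ℝ) : Prop :=
  (∀ φ, 0 ≤ η φ) ∧ ∑ φ : Fin k → A, η φ = 1

def ShiftInv {A : Type*} [Fintype A] (k : ℕ) (η : (Fin (k + 2) → A) → ℝ) : Prop :=
  ∀ ψ : Fin (k + 1) → A, ∑ a : A, η (Fin.cons a ψ) = ∑ a : A, η (Fin.snoc ψ a)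

def genFrom {A V : Type*} (E : V → V → A → Prop) (ω : List A) : Prop :=
  ∃ f : Fin (ω.length + 1) → V, ∀ i : Fin ω.length, E (f i.castSucc) (f i.succ) (ω.get i)

noncomputable def capacity {A : Type*} (T : Set (List A)) : ℝ :=
  Filter.atTop.limsup fun n : ℕ =>
    Real.logb 2 (Nat.card {ω : List A // ω ∈ T ∧ ω.length = n}) / n

def memGammaEps {A : Type*} [Fintype A] [DecidableEq A] {k : ℕ}
    (Γ : Set ((Fin k → A) → ℝ)) (ε : ℝ) (η : (Fin k → A) → ℝ) : Prop :=
  IsProbVec η ∧ ∃ δ, ε < δ ∧ ∀ μ : (Fin k → A) → ℝ, IsProbVec μ → μ ∉ Γ → δ ≤ ‖η - μ‖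

/-- The edge relation of the De-Bruijn-type graph `G_η`: an edge from `u` to `v`
whenever there is a `k`-tuple `φ` with `η φ > 0`, whose `(k-1)`-prefix is `u`
and whose `(k-1)`-suffix is `v`. (Strong connectivity of the multigraph depends
only on which tuples carry positive mass, not on the multiplicities `Mη(φ)`.) -/
def deBruijnEdge {A : Type*} {k : ℕ} (η : (Fin (k + 2) → A) → ℝ)
    (u v : Fin (k + 1) → A) : Prop :=
  ∃ φ : Fin (k + 2) → A, 0 < η φ ∧
    u = (fun j : Fin (k + 1) => φ j.castSucc) ∧ v = (fun j : Fin (k + 1) => φ j.succ)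

def nonIsolated {A : Type*} {k : ℕ} (η : (Fin (k + 2) → A) → ℝ)
    (u : Fin (k + 1) → A) : Prop :=
  ∃ v, deBruijnEdge η u v ∨ deBruijnEdge η v u

/-
A word `ω` traces a walk in the De Bruijn graph: its factors of length `k + 2` are the edges
and its factors of length `k + 1` the vertices, and `fr_ω` is the edge multiset of this walk
divided by its length. For any walk from `a` to `b`, `b` plus the multiset of sources equals
`a` plus the multiset of targets; shift invariance says that the multisets of sources and
targets agree, so the walk is closed, and a closed walk through every edge of positive weight
connects all non-isolated vertices. Conversely, clearing denominators turns `η` into edge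
multiplicities `M η`, balanced by shift invariance. By Euler's theorem they are the edge
multiset of a closed walk, and the word spelled along that walk has frequency vector `η`.
-/

open Relation

section Walk

variable {V E : Type*} (src tgt : E → V)

def IsWalk : V → V → List E → Prop
  | a, b, [] => a = b
  | a, b, e :: T => src e = a ∧ IsWalk (tgt e) b T

variable {src tgt} {a b c : V} {e : E} {T T₁ T₂ : List E}

@[simp] theorem isWalk_nil : IsWalk src tgt a b [] ↔ a = b := Iff.rfl

@[simp] theorem isWalk_cons :
    IsWalk src tgt a b (e :: T) ↔ src e = a ∧ IsWalk src tgt (tgt e) b T := Iff.rfl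

theorem isWalk_append :
    IsWalk src tgt a c (T₁ ++ T₂) ↔ ∃ b, IsWalk src tgt a b T₁ ∧ IsWalk src tgt b c T₂ := by
  induction T₁ generalizing a with
  | nil => simp
  | cons e T₁ ih => simp [ih, and_assoc]

theorem isWalk_iff_map_append :
    IsWalk src tgt a b T ↔ T.map src ++ [b] = a :: T.map tgt := by
  induction T generalizing a with
  | nil => simp [eq_comm]
  | cons e T ih => simp [ih]

theorem IsWalk.cons_map_src_eq (h : IsWalk src tgt a b T) :
    b ::ₘ (T : Multiset E).map src = a ::ₘ (T : Multiset E).map tgt := by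
  induction T generalizing a with
  | nil => simpa using h.symm
  | cons e T ih =>
    obtain ⟨rfl, h⟩ := h
    simp only [← Multiset.cons_coe, Multiset.map_cons]
    rw [Multiset.cons_swap, ih h]

theorem IsWalk.map_src_eq_map_tgt (h : IsWalk src tgt a a T) :
    (T : Multiset E).map src = (T : Multiset E).map tgt :=
  (Multiset.cons_inj_right a).mp h.cons_map_src_eq

theorem IsWalk.exists_rotate (h : IsWalk src tgt a a T) (he : e ∈ T) :
    ∃ T', IsWalk src tgt (src e) (src e) T' ∧ T'.Perm T := by
  obtain ⟨s, t, rfl⟩ := List.append_of_mem he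
  obtain ⟨b, hs, hb, ht⟩ := isWalk_append.mp h
  subst hb
  exact ⟨e :: t ++ s, isWalk_append.mpr ⟨a, ⟨rfl, ht⟩, hs⟩, List.perm_append_comm⟩

variable {R : V → V → Prop}

theorem IsWalk.reflTransGen (h : IsWalk src tgt a b T) (hR : ∀ e ∈ T, R (src e) (tgt e)) :
    ReflTransGen R a b := by
  induction T generalizing a with
  | nil => exact h ▸ ReflTransGen.refl
  | cons e T ih =>
    obtain ⟨rfl, h⟩ := h
    exact ReflTransGen.head (hR e (by simp)) (ih h fun f hf => hR f (by simp [hf]))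

theorem IsWalk.reflTransGen_of_mem (h : IsWalk src tgt a b T) (hR : ∀ e ∈ T, R (src e) (tgt e))
    (he : e ∈ T) : ReflTransGen R a (src e) ∧ ReflTransGen R (tgt e) b := by
  obtain ⟨s, t, rfl⟩ := List.append_of_mem he
  obtain ⟨c, hs, rfl, ht⟩ := isWalk_append.mp h
  exact ⟨hs.reflTransGen fun f hf => hR f (by simp [hf]),
    ht.reflTransGen fun f hf => hR f (by simp [hf])⟩

theorem IsWalk.reflTransGen_of_closed {u v : V} (h : IsWalk src tgt a a T)
    (hR : ∀ e ∈ T, R (src e) (tgt e))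
    (hu : ∃ e ∈ T, u = src e ∨ u = tgt e) (hv : ∃ e ∈ T, v = src e ∨ v = tgt e) :
    ReflTransGen R u v := by
  have through : ∀ x, (∃ e ∈ T, x = src e ∨ x = tgt e) →
      ReflTransGen R x a ∧ ReflTransGen R a x := by
    rintro x ⟨e, he, rfl | rfl⟩ <;> obtain ⟨h₁, h₂⟩ := h.reflTransGen_of_mem hR he
    · exact ⟨h₂.head (hR e he), h₁⟩
    · exact ⟨h₂, h₁.tail (hR e he)⟩
  exact (through u hu).1.trans (through v hv).2

end Walk

section Euler

variable {V E : Type*} [DecidableEq E] {src tgt : E → V} {m : Multiset E} {a b : V}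
  {T : List E}

theorem IsWalk.exists_mem_sub_src_eq (h : IsWalk src tgt a b T) (hTm : (T : Multiset E) ≤ m)
    (hbal : m.map src = m.map tgt) (hab : a ≠ b) : ∃ g ∈ m - T, src g = b := by
  classical
  have hdeg := congrArg (Multiset.count b) h.cons_map_src_eq
  rw [Multiset.count_cons_self, Multiset.count_cons_of_ne hab.symm] at hdeg
  have hin : ((T : Multiset E).map tgt).count b ≤ (m.map tgt).count b :=
    Multiset.count_le_of_le _ (Multiset.map_le_map hTm)
  have hsplit : m.map src = (m - T).map src + (T : Multiset E).map src := by
    rw [← Multiset.map_add, tsub_add_cancel_of_le hTm]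
  rw [← hbal, hsplit, Multiset.count_add] at hin
  have hpos : 0 < ((m - T).map src).count b := by omega
  exact Multiset.mem_map.mp (Multiset.count_pos.mp hpos)

theorem IsWalk.exists_mem_sub_src_eq_src (h : IsWalk src tgt a a T)
    (hconn : ∀ e ∈ m, ∀ f ∈ m,
      ReflTransGen (fun u v => ∃ g ∈ m, src g = u ∧ tgt g = v) (tgt e) (src f))
    (hTm : (T : Multiset E) < m) (hT : T ≠ []) :
    ∃ g ∈ m - T, ∃ e ∈ T, src g = src e := by
  by_contra! hout
  obtain ⟨g₀, hg₀⟩ := Multiset.exists_mem_of_ne_zero (tsub_pos_of_lt hTm).ne'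
  obtain ⟨f, hf⟩ := List.exists_mem_of_ne_nil T hT
  have hclosed : ∀ x, ReflTransGen (fun u v => ∃ g ∈ m, src g = u ∧ tgt g = v) (tgt f) x →
      x ∈ (T : Multiset E).map src := by
    intro x hx
    induction hx with
    | refl => exact h.map_src_eq_map_tgt ▸ Multiset.mem_map_of_mem tgt hf
    | tail _ hstep ih =>
      obtain ⟨g, hgm, rfl, rfl⟩ := hstep
      obtain ⟨e, he, hge⟩ := Multiset.mem_map.mp ih
      have hgT : g ∈ (T : Multiset E) := by
        by_contra hgT
        exact hout g (by simp [Multiset.mem_sub, Multiset.count_eq_zero.mpr hgT,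
          Multiset.count_pos.mpr hgm]) e he hge.symm
      exact h.map_src_eq_map_tgt ▸ Multiset.mem_map_of_mem tgt hgT
  have hsrc := hclosed (src g₀) (hconn f (Multiset.mem_of_le hTm.le (by simpa using hf)) g₀
    (Multiset.mem_of_le tsub_le_self hg₀))
  obtain ⟨e, he, hge⟩ := Multiset.mem_map.mp hsrc
  exact hout g₀ hg₀ e he hge.symm

/-- Euler's theorem. A longest walk inside `m` is closed by balance, and exhausts `m` by
connectivity: otherwise rotate it to start at the source of an unused edge and append that edge. -/
theorem exists_isWalk_coe_eq (hm : m ≠ 0) (hbal : m.map src = m.map tgt)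
    (hconn : ∀ e ∈ m, ∀ f ∈ m,
      ReflTransGen (fun u v => ∃ g ∈ m, src g = u ∧ tgt g = v) (tgt e) (src f)) :
    ∃ a T, IsWalk src tgt a a T ∧ (T : Multiset E) = m := by
  let P : List E → Prop := fun T => (T : Multiset E) ≤ m ∧ ∃ a b, IsWalk src tgt a b T
  have extend : ∀ {a b T g}, IsWalk src tgt a b T → (T : Multiset E) ≤ m → g ∈ m - T →
      src g = b → P (T ++ [g]) := by
    intro a b T g h hTm hg hgb
    refine ⟨?_, a, tgt g, isWalk_append.mpr ⟨b, h, hgb, rfl⟩⟩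
    rw [← Multiset.coe_add, add_comm]
    exact add_le_of_le_tsub_right_of_le hTm (Multiset.singleton_le.mpr hg)
  obtain ⟨e₀, he₀⟩ := Multiset.exists_mem_of_ne_zero hm
  have hP₀ : P [e₀] := ⟨by simpa using he₀, src e₀, tgt e₀, rfl, rfl⟩
  have hbdd : BddAbove (List.length '' {T | P T}) :=
    ⟨Multiset.card m, by rintro _ ⟨T, hT, rfl⟩; simpa using Multiset.card_le_card hT.1⟩
  obtain ⟨T, ⟨hTm, a, b, hT⟩, hlen⟩ := Nat.sSup_mem ⟨_, Set.mem_image_of_mem List.length hP₀⟩ hbdd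
  have longest : ∀ T', P T' → T'.length ≤ T.length :=
    fun T' hT' => hlen ▸ le_csSup hbdd (Set.mem_image_of_mem _ hT')
  have hab : a = b := by
    by_contra hab
    obtain ⟨g, hg, hgb⟩ := hT.exists_mem_sub_src_eq hTm hbal hab
    simpa using longest _ (extend hT hTm hg hgb)
  subst hab
  refine ⟨a, T, hT, hTm.eq_of_not_lt fun hlt => ?_⟩
  have hne : T ≠ [] := List.ne_nil_of_length_pos (longest _ hP₀)
  obtain ⟨g, hg, e, he, hge⟩ := hT.exists_mem_sub_src_eq_src hconn hlt hne
  obtain ⟨T', hT', hperm⟩ := hT.exists_rotate he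
  have hcoe : (T' : Multiset E) = T := Multiset.coe_eq_coe.mpr hperm
  have := longest _ (extend hT' (hcoe ▸ hTm) (hcoe ▸ hg) hge)
  simp [hperm.length_eq] at this

end Euler

section Words

variable {A : Type*} {n : ℕ}

theorem card_filter_getElem?_eq_count [DecidableEq A] (l : List A) (a : A) :
    #{i ∈ range l.length | l[i]? = some a} = l.count a := by
  induction l with
  | nil => simp
  | cons b l ih =>
    rw [card_filter, List.length_cons, sum_range_succ', ← card_filter]
    simp [ih, List.count_cons]

def OccursAt (ω : List A) (i : ℕ) (φ : Fin n → A) : Prop :=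
  ∀ j : Fin n, ω[i + (j : ℕ)]? = some (φ j)

theorem OccursAt.unique {ω : List A} {i : ℕ} {φ ψ : Fin n → A} (hφ : OccursAt ω i φ)
    (hψ : OccursAt ω i ψ) : φ = ψ :=
  funext fun j => Option.some.inj ((hφ j).symm.trans (hψ j))

theorem occCount_eq_count [DecidableEq A] {ω : List A} {T : List (Fin n → A)}
    (hlen : ω.length - n + 1 = T.length) (hT : ∀ i (hi : i < T.length), OccursAt ω i T[i])
    (φ : Fin n → A) : occCount n ω φ = T.count φ := by
  rw [occCount, hlen, ← card_filter_getElem?_eq_count]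
  refine congrArg card (filter_congr fun i hi => ?_)
  have hi : i < T.length := mem_range.mp hi
  rw [List.getElem?_eq_getElem hi, Option.some_inj]
  exact ⟨fun h => (hT i hi).unique h, fun h => h ▸ hT i hi⟩

def windows (n : ℕ) (ω : List A) : List (Fin n → A) :=
  List.ofFn fun i : Fin (ω.length + 1 - n) => fun j : Fin n => ω[(i : ℕ) + j]'(by omega)

@[simp] theorem length_windows (ω : List A) : (windows n ω).length = ω.length + 1 - n :=
  List.length_ofFn

theorem getElem_windows (ω : List A) (i : ℕ) (hi : i < (windows n ω).length) :
    (windows n ω)[i] = fun j : Fin n => ω[i + (j : ℕ)]'(by rw [length_windows] at hi; omega) := by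
  simp only [windows, List.getElem_ofFn]

theorem occursAt_getElem_windows (ω : List A) (i : ℕ) (hi : i < (windows n ω).length) :
    OccursAt ω i (windows n ω)[i] := fun j => by
  rw [getElem_windows]
  exact List.getElem?_eq_getElem _

theorem map_init_windows (ω : List A) :
    (windows (n + 1) ω).map Fin.init = (windows n ω).dropLast := by
  refine List.ext_getElem ?_ fun i _ _ => ?_
  · simp only [List.length_map, List.length_dropLast, length_windows]
    omega
  · simp only [List.getElem_map, List.getElem_dropLast, getElem_windows]
    rfl

theorem map_tail_windows (ω : List A) :
    (windows (n + 1) ω).map Fin.tail = (windows n ω).tail := by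
  refine List.ext_getElem ?_ fun i _ _ => funext fun j => ?_
  · simp only [List.length_map, List.length_tail, length_windows]
    omega
  · simp only [List.getElem_map, List.getElem_tail, getElem_windows, Fin.tail, Fin.val_succ]
    congr 1
    omega

theorem exists_isWalk_windows {ω : List A} (h : n ≤ ω.length) :
    ∃ a b, IsWalk Fin.init Fin.tail a b (windows (n + 1) ω) := by
  have hne : windows n ω ≠ [] := List.ne_nil_of_length_pos (by rw [length_windows]; omega)
  refine ⟨(windows n ω).head hne, (windows n ω).getLast hne, isWalk_iff_map_append.mpr ?_⟩
  rw [map_init_windows, map_tail_windows, List.dropLast_append_getLast, List.cons_head_tail]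

theorem freq_eq_count_windows [DecidableEq A] {ω : List A} (h : n ≤ ω.length) (φ : Fin n → A) :
    freq n ω φ = (windows n ω).count φ / (windows n ω).length := by
  have hlen : ω.length - n + 1 = (windows n ω).length := by rw [length_windows]; omega
  rw [freq, occCount_eq_count hlen (occursAt_getElem_windows ω) φ, hlen]

def walkWord (a : Fin n → A) (T : List (Fin (n + 1) → A)) : List A :=
  List.ofFn a ++ T.map (· (Fin.last n))

@[simp] theorem length_walkWord (a : Fin n → A) (T : List (Fin (n + 1) → A)) :
    (walkWord a T).length = n + T.length := by
  simp [walkWord]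

theorem walkWord_cons (a : Fin n → A) (e : Fin (n + 1) → A) (T : List (Fin (n + 1) → A))
    (he : Fin.init e = a) : walkWord a (e :: T) = List.ofFn e ++ T.map (· (Fin.last n)) := by
  rw [walkWord, List.map_cons, List.ofFn_succ_last, ← he, List.append_assoc,
    List.singleton_append]
  rfl

theorem occursAt_walkWord {a b : Fin n → A} {T : List (Fin (n + 1) → A)}
    (h : IsWalk Fin.init Fin.tail a b T) (i : ℕ) (hi : i < T.length) :
    OccursAt (walkWord a T) i T[i] := by
  induction T generalizing a i with
  | nil => simp at hi
  | cons e T ih =>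
    obtain ⟨he, h⟩ := h
    rw [walkWord_cons a e T he]
    cases i with
    | zero =>
      intro j
      rw [zero_add, List.getElem?_append_left (by simp [j.isLt]), List.getElem?_ofFn]
      simp [j.is_le]
    | succ i =>
      intro j
      rw [List.ofFn_succ, List.cons_append, Nat.add_right_comm, List.getElem?_cons_succ]
      exact ih h i (by simpa using hi) j

theorem freq_walkWord [DecidableEq A] {a b : Fin n → A} {T : List (Fin (n + 1) → A)}
    (h : IsWalk Fin.init Fin.tail a b T) (hT : T ≠ []) (φ : Fin (n + 1) → A) :
    freq (n + 1) (walkWord a T) φ = T.count φ / T.length := by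
  have hlen : (walkWord a T).length - (n + 1) + 1 = T.length := by
    have := List.length_pos_iff.mpr hT
    simp only [length_walkWord]; omega
  rw [freq, occCount_eq_count hlen (occursAt_walkWord h) φ, hlen]

end Words

theorem exists_multiset_count_div_card_eq {ι : Type*} [Fintype ι] [DecidableEq ι] (x : ι → ℝ)
    (hx : ∀ i, 0 ≤ x i) (hsum : ∑ i, x i = 1) (hrat : ∀ i, ∃ q : ℚ, x i = q) :
    ∃ s : Multiset ι, s ≠ 0 ∧ ∀ i, x i = s.count i / Multiset.card s := by
  choose q hq using hrat
  have hq₀ : ∀ i, 0 ≤ q i := fun i => by exact_mod_cast hq i ▸ hx i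
  set M := ∏ i, (q i).den
  have hM₀ : (0 : ℝ) < M := by exact_mod_cast prod_pos fun i _ => (q i).den_pos
  let N : ι → ℕ := fun i => (q i).num.toNat * (M / (q i).den)
  have hN : ∀ i, (N i : ℝ) = M * x i := fun i => by
    have hdvd : (q i).den ∣ M := dvd_prod_of_mem _ (mem_univ i)
    have hnum : (((q i).num.toNat : ℕ) : ℝ) = (q i).num := by
      exact_mod_cast Int.toNat_of_nonneg (Rat.num_nonneg.mpr (hq₀ i))
    rw [hq i, Rat.cast_def, Nat.cast_mul, hnum, Nat.cast_div hdvd (by positivity)]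
    field_simp
  let s : Multiset ι := ∑ i, Multiset.replicate (N i) i
  have hcount : ∀ i, s.count i = N i := fun i => by
    simp [s, Multiset.count_sum', Multiset.count_replicate]
  have hcard : (Multiset.card s : ℝ) = M := by
    simp [s, hN, ← mul_sum, hsum]
  refine ⟨s, fun hs => hM₀.ne' ?_, fun i => ?_⟩
  · rw [← hcard, hs, Multiset.card_zero, Nat.cast_zero]
  · rw [hcount, hcard, hN]
    field_simp

section DeBruijn

variable {A : Type*}

section Counting

variable [DecidableEq A] [Fintype A] {n : ℕ}

theorem count_map_init (s : Multiset (Fin (n + 1) → A)) (ψ : Fin n → A) :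
    (s.map Fin.init).count ψ = ∑ a, s.count (Fin.snoc ψ a) := by
  induction s using Multiset.induction_on with
  | empty => simp
  | cons e s ih =>
    have hfiber : ∀ a, (Fin.snoc ψ a = e) ↔ (ψ = Fin.init e ∧ a = e (Fin.last n)) := fun a => by
      rw [← Fin.snoc_init_self e, Fin.snoc_inj, Fin.init_snoc, Fin.snoc_last]
    simp [Multiset.count_cons, sum_add_distrib, ih, hfiber, ite_and]

theorem count_map_tail (s : Multiset (Fin (n + 1) → A)) (ψ : Fin n → A) :
    (s.map Fin.tail).count ψ = ∑ a, s.count (Fin.cons a ψ) := by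
  induction s using Multiset.induction_on with
  | empty => simp
  | cons e s ih =>
    have hfiber : ∀ a, (Fin.cons a ψ = e) ↔ (ψ = Fin.tail e ∧ a = e 0) := fun a => by
      rw [← Fin.cons_self_tail e, Fin.cons_inj, Fin.tail_cons, Fin.cons_zero, and_comm]
    simp [Multiset.count_cons, sum_add_distrib, ih, hfiber, ite_and]

end Counting

variable {k : ℕ} {η : (Fin (k + 2) → A) → ℝ} {u v : Fin (k + 1) → A}

theorem deBruijnEdge_init_tail {φ : Fin (k + 2) → A} (hφ : 0 < η φ) :
    deBruijnEdge η (Fin.init φ) (Fin.tail φ) :=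
  ⟨φ, hφ, rfl, rfl⟩

theorem nonIsolated_iff :
    nonIsolated η u ↔ ∃ φ, 0 < η φ ∧ (u = Fin.init φ ∨ u = Fin.tail φ) := by
  constructor
  · rintro ⟨v, ⟨φ, hφ, rfl, -⟩ | ⟨φ, hφ, -, rfl⟩⟩
    exacts [⟨φ, hφ, Or.inl rfl⟩, ⟨φ, hφ, Or.inr rfl⟩]
  · rintro ⟨φ, hφ, rfl | rfl⟩
    exacts [⟨_, Or.inl (deBruijnEdge_init_tail hφ)⟩, ⟨_, Or.inr (deBruijnEdge_init_tail hφ)⟩]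

variable [DecidableEq A]

theorem pos_iff_mem_of_eq_count_div {s : Multiset (Fin (k + 2) → A)} {d : ℝ}
    (hs : ∀ φ, η φ = s.count φ / d) (hd : 0 < d) (φ : Fin (k + 2) → A) : 0 < η φ ↔ φ ∈ s := by
  rw [hs, div_pos_iff_of_pos_right hd, Nat.cast_pos, Multiset.count_pos]

variable [Fintype A]

theorem map_init_eq_map_tail_of_shiftInv (hsi : ShiftInv k η) {s : Multiset (Fin (k + 2) → A)}
    {d : ℝ} (hs : ∀ φ, η φ = s.count φ / d) (hd : d ≠ 0) : s.map Fin.init = s.map Fin.tail := by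
  refine Multiset.ext.mpr fun ψ => ?_
  have h := hsi ψ
  simp only [hs, ← sum_div, div_left_inj' hd] at h
  rw [count_map_init, count_map_tail]
  exact_mod_cast h.symm

theorem IsWalk.reflTransGen_deBruijnEdge (hsi : ShiftInv k η) {a b : Fin (k + 1) → A}
    {T : List (Fin (k + 2) → A)} (h : IsWalk Fin.init Fin.tail a b T) (hne : T ≠ [])
    (hT : ∀ φ, η φ = T.count φ / T.length) (hu : nonIsolated η u) (hv : nonIsolated η v) :
    ReflTransGen (deBruijnEdge η) u v := by
  have hlen : (0 : ℝ) < T.length := by exact_mod_cast List.length_pos_iff.mpr hne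
  have hT' : ∀ φ, η φ = (T : Multiset _).count φ / T.length := by simpa using hT
  have hmem := pos_iff_mem_of_eq_count_div hT' hlen
  have hab : a = b := by
    have hends := h.cons_map_src_eq
    rw [map_init_eq_map_tail_of_shiftInv hsi hT' hlen.ne'] at hends
    exact ((Multiset.cons_inj_left _).mp hends).symm
  subst hab
  have hvert : ∀ {x}, nonIsolated η x → ∃ e ∈ T, x = Fin.init e ∨ x = Fin.tail e := fun hx => by
    obtain ⟨φ, hφ, hφx⟩ := nonIsolated_iff.mp hx
    exact ⟨φ, Multiset.mem_coe.mp ((hmem φ).mp hφ), hφx⟩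
  exact h.reflTransGen_of_closed
    (fun e he => deBruijnEdge_init_tail ((hmem e).mpr (Multiset.mem_coe.mpr he)))
    (hvert hu) (hvert hv)

theorem exists_closed_isWalk (hprob : IsProbVec η) (hrat : ∀ φ, ∃ q : ℚ, η φ = (q : ℝ))
    (hsi : ShiftInv k η)
    (hconn : ∀ u v : Fin (k + 1) → A, nonIsolated η u → nonIsolated η v →
      ReflTransGen (deBruijnEdge η) u v) :
    ∃ a T, IsWalk Fin.init Fin.tail a a T ∧ T ≠ [] ∧ ∀ φ, η φ = T.count φ / T.length := by
  obtain ⟨m, hm, hmη⟩ := exists_multiset_count_div_card_eq η hprob.1 hprob.2 hrat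
  have hcard : (0 : ℝ) < Multiset.card m := by exact_mod_cast Multiset.card_pos.mpr hm
  have hmem := pos_iff_mem_of_eq_count_div hmη hcard
  have hconn' : ∀ e ∈ m, ∀ f ∈ m, ReflTransGen
      (fun u v => ∃ g ∈ m, Fin.init g = u ∧ Fin.tail g = v) (Fin.tail e) (Fin.init f) := by
    intro e he f hf
    refine ReflTransGen.mono ?_ _ _ (hconn _ _
      (nonIsolated_iff.mpr ⟨e, (hmem e).mpr he, Or.inr rfl⟩)
      (nonIsolated_iff.mpr ⟨f, (hmem f).mpr hf, Or.inl rfl⟩))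
    rintro u v ⟨φ, hφ, rfl, rfl⟩
    exact ⟨φ, (hmem φ).mp hφ, rfl, rfl⟩
  obtain ⟨a, T, hT, rfl⟩ :=
    exists_isWalk_coe_eq hm (map_init_eq_map_tail_of_shiftInv hsi hmη hcard.ne') hconn'
  exact ⟨a, T, hT, by rintro rfl; exact hm rfl, by simpa using hmη⟩

end DeBruijn

theorem stmt14 {A : Type*} [Fintype A] [DecidableEq A] (k : ℕ)
    (η : (Fin (k + 2) → A) → ℝ) (hprob : IsProbVec η)
    (hrat : ∀ φ, ∃ q : ℚ, η φ = (q : ℝ)) (hsi : ShiftInv k η) :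
    (∃ ω : List A, k + 2 ≤ ω.length ∧ ∀ φ, freq (k + 2) ω φ = η φ) ↔
    (∀ u v : Fin (k + 1) → A, nonIsolated η u → nonIsolated η v →
      Relation.ReflTransGen (deBruijnEdge η) u v) := by
  constructor
  · rintro ⟨ω, hlen, hfreq⟩ u v hu hv
    obtain ⟨a, b, hwalk⟩ := exists_isWalk_windows (n := k + 1) (by omega : k + 1 ≤ ω.length)
    refine hwalk.reflTransGen_deBruijnEdge hsi ?_ (fun φ => ?_) hu hv
    · exact List.ne_nil_of_length_pos (by rw [length_windows]; omega)
    · rw [← hfreq, freq_eq_count_windows hlen]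
  · intro hconn
    obtain ⟨a, T, hT, hne, hη⟩ := exists_closed_isWalk hprob hrat hsi hconn
    refine ⟨walkWord a T, ?_, fun φ => (freq_walkWord hT hne φ).trans (hη φ).symm⟩
    have := List.length_pos_iff.mpr hne
    simp only [length_walkWord]
    omega
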